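/- The expected number of internal equilibria tends to infinity as the number of players grows: E(2,d) = ∫_0^∞ f_d(t) dt → +∞ as d → ∞. -/

import Mathlib

open Finset MeasureTheory

/-- `M d t = ∑_{k=0}^{d-1} C(d-1,k)² t^{2k}`. -/
noncomputable def M (d : ℕ) (t : ℝ) : ℝ :=
  ∑ k ∈ Finset.range d, ((d - 1).choose k : ℝ) ^ 2 * t ^ (2 * k)

/-- `A d t = ∑_{k=1}^{d-1} k² C(d-1,k)² t^{2(k-1)}`. -/
noncomputable def A (d : ℕ) (t : ℝ) : ℝ :=
  ∑ k ∈ Finset.Icc 1 (d - 1), (k : ℝ) ^ 2 * ((d - 1).choose k : ℝ) ^ 2 * t ^ (2 * (k - 1))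

/-- `B d t = ∑_{k=1}^{d-1} k C(d-1,k)² t^{2k-1}`. -/
noncomputable def B (d : ℕ) (t : ℝ) : ℝ :=
  ∑ k ∈ Finset.Icc 1 (d - 1), (k : ℝ) * ((d - 1).choose k : ℝ) ^ 2 * t ^ (2 * k - 1)

/-- The density `f d t = (1/π)·√(A_d(t)·M_d(t) − B_d(t)²) / M_d(t)`. -/
noncomputable def f (d : ℕ) (t : ℝ) : ℝ :=
  (1 / Real.pi) * Real.sqrt (A d t * M d t - (B d t) ^ 2) / M d t

/-- The coefficients `a_k`. -/
noncomputable def a (d k : ℕ) : ℝ :=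
  (∑ i ∈ Finset.range d, ∑ j ∈ Finset.range (d - 1),
      if i + j = k then ((d - 1).choose i : ℝ) ^ 2 * ((d - 2).choose j : ℝ) ^ 2 else 0)
  - (∑ i ∈ Finset.range (d - 1), ∑ j ∈ Finset.range (d - 1),
      if i + j + 1 = k then
        ((d - 2).choose i : ℝ) * ((d - 1).choose (i + 1) : ℝ) *
          ((d - 2).choose j : ℝ) * ((d - 1).choose (j + 1) : ℝ)
      else 0)

/-!
Write `n = d - 1` and weight `k ∈ {0, …, n}` by `w_k(t) = C(n,k)² t^{2k}`, and let `μ(t)` and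
`σ²(t)` be the mean and variance of `k` under these weights. Then `f_d(t) = σ(t) / (π t)` while
`μ'(t) = 2 σ²(t) / t`, so `f_d ≥ μ' / (2π sup σ)`. As `t` runs over `(0, ∞)`, `μ` runs from `0` to
`n`, hence `∫ f_d ≥ (n - 2) / (2π sup σ)`.

To bound `σ²`, write `2 σ² (∑ w)² = ∑_{i,j} (i - j)² w_i w_j` and group the pairs by `m = i + j`.
Along the antidiagonal `i + j = m` the products `C(n,i)² C(n,j)²` shrink by a factor
`(1 - D/n)²` per step away from the centre once `|i - j| > 2D`, and summing these geometric tails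
gives `σ² ≤ 16 (n/D)³` whenever `4 D² ≤ n`. Taking `D ≈ √n / 2` yields `∫ f_d ≳ n^{1/4}`.
-/

open Real

section WeightedSums

variable {ι : Type*} (s : Finset ι) (w x : ι → ℝ)

theorem two_mul_sum_sq_mul_sum_sub_sq :
    2 * ((∑ i ∈ s, x i ^ 2 * w i) * (∑ i ∈ s, w i) - (∑ i ∈ s, x i * w i) ^ 2) =
      ∑ i ∈ s, ∑ j ∈ s, (x i - x j) ^ 2 * (w i * w j) := by
  have h : ∀ i j, (x i - x j) ^ 2 * (w i * w j) =
      x i ^ 2 * w i * w j + w i * (x j ^ 2 * w j) - 2 * (x i * w i * (x j * w j)) := fun i j => by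
    ring
  simp only [h, Finset.sum_add_distrib, Finset.sum_sub_distrib, ← Finset.mul_sum,
    ← Finset.sum_mul]
  ring

theorem sum_sq_mul_sum_sub_sq_le (c : ℝ) :
    (∑ i ∈ s, x i ^ 2 * w i) * (∑ i ∈ s, w i) - (∑ i ∈ s, x i * w i) ^ 2 ≤
      (∑ i ∈ s, w i) * ∑ i ∈ s, (x i - c) ^ 2 * w i := by
  have h : ∑ i ∈ s, (x i - c) ^ 2 * w i =
      ∑ i ∈ s, x i ^ 2 * w i - 2 * c * ∑ i ∈ s, x i * w i + c ^ 2 * ∑ i ∈ s, w i := by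
    simp only [Finset.mul_sum, ← Finset.sum_sub_distrib, ← Finset.sum_add_distrib]
    exact Finset.sum_congr rfl fun i _ => by ring
  rw [h]
  nlinarith [sq_nonneg (c * ∑ i ∈ s, w i - ∑ i ∈ s, x i * w i)]

end WeightedSums

theorem Finset.sum_range_succ_eq_sum_Icc_one {M : Type*} [AddCommMonoid M] {F : ℕ → M}
    (h0 : F 0 = 0) (n : ℕ) : ∑ k ∈ range (n + 1), F k = ∑ k ∈ Icc 1 n, F k := by
  rw [Nat.range_succ_eq_Icc_zero, ← insert_Icc_add_one_left_eq_Icc n.zero_le,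
    sum_insert (by simp), h0, zero_add]
  rfl

theorem Finset.sum_comp_le_two_mul {ι κ : Type*} [DecidableEq κ] {s : Finset ι} {T : Finset κ}
    {g : ι → κ} {F : κ → ℝ} (hF : ∀ b ∈ T, 0 ≤ F b) (hg : ∀ a ∈ s, g a ∈ T)
    (hfib : ∀ b ∈ T, #{a ∈ s | g a = b} ≤ 2) :
    ∑ a ∈ s, F (g a) ≤ 2 * ∑ b ∈ T, F b := by
  rw [← Finset.sum_fiberwise_of_maps_to hg, Finset.mul_sum]
  refine Finset.sum_le_sum fun b hb => ?_
  rw [Finset.sum_congr rfl fun a ha => by rw [(Finset.mem_filter.1 ha).2], Finset.sum_const,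
    nsmul_eq_mul]
  exact mul_le_mul_of_nonneg_right (by exact_mod_cast hfib b hb) (hF b hb)

theorem Finset.sum_range_sum_range_eq_sum_range_sum_range {M : Type*} [AddCommMonoid M]
    {F : ℕ → ℕ → M} (n : ℕ) (hF : ∀ i j, n < i ∨ n < j → F i j = 0) :
    ∑ i ∈ range (n + 1), ∑ j ∈ range (n + 1), F i j =
      ∑ m ∈ range (2 * n + 1), ∑ i ∈ range (m + 1), F i (m - i) := by
  rw [← Finset.sum_product', ← Finset.sum_fiberwise_of_maps_to (g := fun p => p.1 + p.2)
    (t := range (2 * n + 1)) fun p hp => by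
      simp only [Finset.mem_product, Finset.mem_range] at hp ⊢; omega]
  refine Finset.sum_congr rfl fun m _ => ?_
  rw [← Finset.Nat.sum_antidiagonal_eq_sum_range_succ F m]
  refine Finset.sum_subset (fun p hp => ?_) (fun p hp hp' => hF _ _ ?_)
  · simp only [Finset.mem_filter] at hp
    exact Finset.HasAntidiagonal.mem_antidiagonal.2 hp.2
  · simp only [Finset.mem_filter, Finset.mem_product, Finset.mem_range, not_and] at hp'
    have := Finset.HasAntidiagonal.mem_antidiagonal.1 hp
    omega

theorem le_mul_pow_sub_of_succ_le {g : ℕ → ℝ} {ρ : ℝ} {D N : ℕ} (hρ : 0 ≤ ρ)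
    (hmono : ∀ s < N, g (s + 1) ≤ g s) (hstep : ∀ s < N, D ≤ s → g (s + 1) ≤ ρ * g s) :
    ∀ s ≤ N, g s ≤ g 0 * ρ ^ (s - D) := by
  intro s
  induction s with
  | zero => simp
  | succ s ih =>
    intro hs
    rcases le_or_gt D s with hDs | hsD
    · calc g (s + 1) ≤ ρ * g s := hstep s hs hDs
        _ ≤ ρ * (g 0 * ρ ^ (s - D)) := mul_le_mul_of_nonneg_left (ih (by omega)) hρ
        _ = g 0 * ρ ^ (s + 1 - D) := by rw [Nat.sub_add_comm hDs, pow_succ]; ring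
    · calc g (s + 1) ≤ g s := hmono s hs
        _ ≤ g 0 * ρ ^ (s - D) := ih (by omega)
        _ = g 0 * ρ ^ (s + 1 - D) := by rw [Nat.sub_eq_zero_of_le hsD.le,
            Nat.sub_eq_zero_of_le hsD]

theorem sum_range_sq_mul_pow_le {ρ : ℝ} (h0 : 0 ≤ ρ) (h1 : ρ < 1) (N : ℕ) :
    ∑ s ∈ range N, (2 * (s : ℝ) + 1) ^ 2 * ρ ^ s ≤ 8 / (1 - ρ) ^ 3 := by
  have hsum := (hasSum_choose_mul_geometric_of_norm_lt_one 2
    (by rwa [Real.norm_of_nonneg h0] : ‖ρ‖ < 1)).mul_left 8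
  refine (Finset.sum_le_sum fun s _ => ?_).trans
    (sum_le_hasSum (range N) (fun s _ => by positivity) hsum |>.trans_eq (by ring))
  rw [Nat.cast_choose_two, ← mul_assoc]
  refine mul_le_mul_of_nonneg_right ?_ (pow_nonneg h0 s)
  push_cast
  nlinarith [(s.cast_nonneg : (0 : ℝ) ≤ s)]

theorem sum_range_sq_mul_pow_sub_le {ρ : ℝ} (h0 : 0 ≤ ρ) (h1 : ρ < 1) {D : ℕ}
    (hD : 1 / 2 ≤ ρ ^ D) (N : ℕ) :
    ∑ s ∈ range N, (2 * (s : ℝ) + 1) ^ 2 * ρ ^ (s - D) ≤ 16 / (1 - ρ) ^ 3 := by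
  have hpow : ∀ s, ρ ^ (s - D) ≤ 2 * ρ ^ s := fun s => by
    have : ρ ^ (s - D) * ρ ^ D ≤ ρ ^ s := by
      rcases le_total D s with hDs | hsD
      · rw [pow_sub_mul_pow ρ hDs]
      · rw [Nat.sub_eq_zero_of_le hsD, pow_zero, one_mul]
        exact pow_le_pow_of_le_one h0 h1.le hsD
    nlinarith [pow_nonneg h0 (s - D)]
  calc ∑ s ∈ range N, (2 * (s : ℝ) + 1) ^ 2 * ρ ^ (s - D)
      ≤ ∑ s ∈ range N, 2 * ((2 * (s : ℝ) + 1) ^ 2 * ρ ^ s) :=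
        Finset.sum_le_sum fun s _ => by nlinarith [hpow s, sq_nonneg (2 * (s : ℝ) + 1)]
    _ ≤ 2 * (8 / (1 - ρ) ^ 3) := by
        rw [← Finset.mul_sum]; gcongr; exact sum_range_sq_mul_pow_le h0 h1 N
    _ = 16 / (1 - ρ) ^ 3 := by ring

theorem choose_mul_choose_succ_le {n i j D : ℕ} (h : i + 1 + 2 * D ≤ j) (hj : j < n) :
    (n.choose i : ℝ) * n.choose (j + 1) ≤ (1 - D / n) * (n.choose (i + 1) * n.choose j) := by
  have hn : (0 : ℝ) < n := by exact_mod_cast (by omega : 0 < n)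
  have hi : (n.choose (i + 1) : ℝ) * (i + 1) = n.choose i * (n - i) := by
    rw [← Nat.cast_sub (by omega : i ≤ n)]; exact_mod_cast Nat.choose_succ_right_eq n i
  have hj' : (n.choose (j + 1) : ℝ) * (j + 1) = n.choose j * (n - j) := by
    rw [← Nat.cast_sub hj.le]; exact_mod_cast Nat.choose_succ_right_eq n j
  have hij : (i : ℝ) + 1 + 2 * D ≤ j := by exact_mod_cast h
  have hjn : (j : ℝ) + 1 ≤ n := by exact_mod_cast hj
  have key : (n.choose i : ℝ) * n.choose (j + 1) * ((n - i) * (j + 1)) =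
      n.choose (i + 1) * n.choose j * ((i + 1) * (n - j)) := by
    linear_combination
      (n.choose (j + 1) : ℝ) * (j + 1) * hi.symm + (n.choose (i + 1) : ℝ) * (i + 1) * hj'
  have hP : 0 < ((n : ℝ) - i) * (j + 1) := by
    apply mul_pos <;> linarith
  have hq : (n : ℝ) * (i + 1) * (n - j) ≤ (n - D) * (j + 1) * (n - i) := by
    have hD : (0 : ℝ) ≤ D := D.cast_nonneg
    refine mul_le_mul ?_ (by linarith) (by linarith) (by nlinarith)
    nlinarith [mul_le_mul_of_nonneg_left hij hn.le, mul_le_mul_of_nonneg_left hjn hD]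
  have hv : (0 : ℝ) ≤ n.choose (i + 1) * n.choose j := by positivity
  rw [one_sub_div hn.ne', div_mul_eq_mul_div, le_div_iff₀ hn]
  refine le_of_mul_le_mul_right ?_ hP
  calc (n.choose i : ℝ) * n.choose (j + 1) * n * ((n - i) * (j + 1))
      = n.choose (i + 1) * n.choose j * (n * (i + 1) * (n - j)) := by
        linear_combination (n : ℝ) * key
    _ ≤ n.choose (i + 1) * n.choose j * ((n - D) * (j + 1) * (n - i)) :=
        mul_le_mul_of_nonneg_left hq hv
    _ = (n - D) * (n.choose (i + 1) * n.choose j) * ((n - i) * (j + 1)) := by ring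

theorem choose_mul_choose_succ_sq_le {n i j D : ℕ} (h : i + 1 + 2 * D ≤ j) :
    ((n.choose i : ℝ) * n.choose (j + 1)) ^ 2 ≤
      (1 - D / n) ^ 2 * ((n.choose (i + 1) : ℝ) * n.choose j) ^ 2 := by
  rcases lt_or_ge j n with hj | hj
  · rw [← mul_pow]
    exact pow_le_pow_left₀ (by positivity) (choose_mul_choose_succ_le h hj) 2
  · rw [Nat.choose_eq_zero_of_lt (by omega : n < j + 1)]
    simp only [Nat.cast_zero, mul_zero, ne_eq, OfNat.ofNat_ne_zero, not_false_eq_true, zero_pow]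
    positivity

noncomputable def chooseSqWeight (n : ℕ) (t : ℝ) (k : ℕ) : ℝ := (n.choose k : ℝ) ^ 2 * t ^ (2 * k)

noncomputable def chooseSqMoment (n j : ℕ) (t : ℝ) : ℝ :=
  ∑ k ∈ range (n + 1), (k : ℝ) ^ j * chooseSqWeight n t k

noncomputable def chooseSqMean (n : ℕ) (t : ℝ) : ℝ := chooseSqMoment n 1 t / chooseSqMoment n 0 t

-- `chooseSqMoment n 0 t ^ 2` times the variance of `k` under the weights `chooseSqWeight n t k`
noncomputable def chooseSqVar (n : ℕ) (t : ℝ) : ℝ :=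
  chooseSqMoment n 2 t * chooseSqMoment n 0 t - chooseSqMoment n 1 t ^ 2

section ChooseSq

variable (n : ℕ) (t : ℝ)

theorem chooseSqWeight_nonneg (k : ℕ) : 0 ≤ chooseSqWeight n t k := by
  unfold chooseSqWeight
  rw [pow_mul]
  positivity

theorem chooseSqMoment_zero : chooseSqMoment n 0 t = ∑ k ∈ range (n + 1), chooseSqWeight n t k := by
  simp [chooseSqMoment]

theorem chooseSqMoment_one :
    chooseSqMoment n 1 t = ∑ k ∈ range (n + 1), (k : ℝ) * chooseSqWeight n t k := by
  simp [chooseSqMoment]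

theorem chooseSqWeight_le_chooseSqMoment_zero {k : ℕ} (hk : k ≤ n) :
    chooseSqWeight n t k ≤ chooseSqMoment n 0 t := by
  rw [chooseSqMoment_zero]
  exact Finset.single_le_sum (fun k _ => chooseSqWeight_nonneg n t k) (by simpa [Nat.lt_succ_iff])

theorem chooseSqMoment_zero_pos : 0 < chooseSqMoment n 0 t :=
  one_pos.trans_le <| by
    simpa [chooseSqWeight] using chooseSqWeight_le_chooseSqMoment_zero n t (Nat.zero_le n)

theorem pow_le_chooseSqMoment_zero : t ^ (2 * n) ≤ chooseSqMoment n 0 t := by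
  simpa [chooseSqWeight] using chooseSqWeight_le_chooseSqMoment_zero n t le_rfl

theorem two_mul_chooseSqVar :
    2 * chooseSqVar n t = ∑ i ∈ range (n + 1), ∑ j ∈ range (n + 1),
      ((i : ℝ) - j) ^ 2 * (chooseSqWeight n t i * chooseSqWeight n t j) := by
  rw [chooseSqVar, chooseSqMoment_zero, chooseSqMoment_one, chooseSqMoment,
    two_mul_sum_sq_mul_sum_sub_sq]

theorem chooseSqVar_nonneg : 0 ≤ chooseSqVar n t := by
  have h := two_mul_chooseSqVar n t
  have : 0 ≤ ∑ i ∈ range (n + 1), ∑ j ∈ range (n + 1),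
      ((i : ℝ) - j) ^ 2 * (chooseSqWeight n t i * chooseSqWeight n t j) :=
    Finset.sum_nonneg fun i _ => Finset.sum_nonneg fun j _ =>
      mul_nonneg (sq_nonneg _) (mul_nonneg (chooseSqWeight_nonneg ..) (chooseSqWeight_nonneg ..))
  linarith

theorem chooseSqVar_le (c : ℝ) :
    chooseSqVar n t ≤ chooseSqMoment n 0 t *
      ∑ k ∈ range (n + 1), ((k : ℝ) - c) ^ 2 * chooseSqWeight n t k := by
  rw [chooseSqVar, chooseSqMoment_zero, chooseSqMoment_one, chooseSqMoment]
  exact sum_sq_mul_sum_sub_sq_le _ _ _ c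

end ChooseSq

section DensityFormula

variable (n : ℕ) (t : ℝ)

theorem M_succ : M (n + 1) t = chooseSqMoment n 0 t := by
  simp [M, chooseSqMoment_zero, chooseSqWeight]

theorem sq_mul_A_succ : t ^ 2 * A (n + 1) t = chooseSqMoment n 2 t := by
  rw [chooseSqMoment, Finset.sum_range_succ_eq_sum_Icc_one (by simp), A, Finset.mul_sum,
    Nat.add_sub_cancel]
  refine Finset.sum_congr rfl fun k hk => ?_
  obtain ⟨k, rfl⟩ := Nat.exists_eq_add_of_le' (Finset.mem_Icc.1 hk).1
  simp only [chooseSqWeight, Nat.add_sub_cancel, mul_add, pow_add]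
  ring

theorem mul_B_succ : t * B (n + 1) t = chooseSqMoment n 1 t := by
  rw [chooseSqMoment, Finset.sum_range_succ_eq_sum_Icc_one (by simp), B, Finset.mul_sum,
    Nat.add_sub_cancel]
  refine Finset.sum_congr rfl fun k hk => ?_
  obtain ⟨k, rfl⟩ := Nat.exists_eq_add_of_le' (Finset.mem_Icc.1 hk).1
  rw [show 2 * (k + 1) - 1 = 2 * k + 1 by omega]
  simp only [chooseSqWeight, mul_add, pow_add]
  ring

theorem f_succ_eq {t : ℝ} (ht : 0 < t) :
    f (n + 1) t = √(chooseSqVar n t) / (π * t * chooseSqMoment n 0 t) := by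
  have hA : A (n + 1) t = chooseSqMoment n 2 t / t ^ 2 := by
    rw [← sq_mul_A_succ]; field_simp
  have hB : B (n + 1) t = chooseSqMoment n 1 t / t := by
    rw [← mul_B_succ]; field_simp
  have hvar : A (n + 1) t * M (n + 1) t - B (n + 1) t ^ 2 = chooseSqVar n t / t ^ 2 := by
    rw [hA, hB, M_succ, chooseSqVar]; field_simp
  rw [f, hvar, Real.sqrt_div' _ (sq_nonneg t), Real.sqrt_sq ht.le, M_succ]
  field_simp

theorem f_succ_nonneg : 0 ≤ f (n + 1) t := by
  rw [f, M_succ]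
  have := chooseSqMoment_zero_pos n t
  positivity

theorem continuous_f_succ : Continuous (f (n + 1)) := by
  have hM : ∀ t, M (n + 1) t ≠ 0 := fun t => by
    rw [M_succ]; exact (chooseSqMoment_zero_pos n t).ne'
  have hA : Continuous (A (n + 1)) := by unfold A; fun_prop
  have hB : Continuous (B (n + 1)) := by unfold B; fun_prop
  have hM' : Continuous (M (n + 1)) := by unfold M; fun_prop
  unfold f
  fun_prop (disch := exact hM _)

end DensityFormula

section Derivative

variable (n : ℕ) {t : ℝ}

theorem hasDerivAt_chooseSqMoment (j : ℕ) (ht : t ≠ 0) :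
    HasDerivAt (chooseSqMoment n j) (2 * chooseSqMoment n (j + 1) t / t) t := by
  have hterm : ∀ k ∈ range (n + 1), HasDerivAt (fun t => (k : ℝ) ^ j * chooseSqWeight n t k)
      ((k : ℝ) ^ j * ((n.choose k : ℝ) ^ 2 * ((2 * k : ℕ) * t ^ (2 * k - 1)))) t :=
    fun k _ => ((hasDerivAt_pow (2 * k) t).const_mul _).const_mul _
  refine (HasDerivAt.fun_sum hterm).congr_deriv ?_
  rw [chooseSqMoment, Finset.mul_sum, Finset.sum_div]
  refine Finset.sum_congr rfl fun k _ => ?_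
  rcases Nat.eq_zero_or_pos k with rfl | hk
  · simp
  rw [eq_div_iff ht, chooseSqWeight,
    show t ^ (2 * k) = t ^ (2 * k - 1) * t by rw [← pow_succ, Nat.sub_add_cancel (by omega)]]
  push_cast
  ring

theorem chooseSqMoment_continuous (j : ℕ) : Continuous (chooseSqMoment n j) := by
  unfold chooseSqMoment chooseSqWeight; fun_prop

theorem chooseSqMean_continuous : Continuous (chooseSqMean n) :=
  (chooseSqMoment_continuous n 1).div (chooseSqMoment_continuous n 0)
    fun t => (chooseSqMoment_zero_pos n t).ne'

theorem hasDerivAt_chooseSqMean (ht : t ≠ 0) :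
    HasDerivAt (chooseSqMean n) (2 * chooseSqVar n t / (t * chooseSqMoment n 0 t ^ 2)) t := by
  refine ((hasDerivAt_chooseSqMoment n 1 ht).div (hasDerivAt_chooseSqMoment n 0 ht)
    (chooseSqMoment_zero_pos n t).ne').congr_deriv ?_
  rw [chooseSqVar]
  field_simp

end Derivative

-- `chooseSqWeight n t i * chooseSqWeight n t (m - i) = chooseSqProd n m i * t ^ (2 * m)`
-- for `i ≤ m`
noncomputable def chooseSqProd (n m i : ℕ) : ℝ := ((n.choose i : ℝ) * n.choose (m - i)) ^ 2

section ChooseSqProd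

variable (n m : ℕ)

theorem chooseSqProd_sub {i : ℕ} (hi : i ≤ m) : chooseSqProd n m (m - i) = chooseSqProd n m i := by
  rw [chooseSqProd, chooseSqProd, Nat.sub_sub_self hi, mul_comm]

theorem chooseSqProd_le (D : ℕ) {i : ℕ} (hi : i ≤ m) :
    chooseSqProd n m i ≤
      chooseSqProd n m (m / 2) * ((1 - D / n) ^ 2) ^ (m / 2 - min i (m - i) - D) := by
  have hstep : ∀ D' s, s < m / 2 → D' ≤ s → chooseSqProd n m (m / 2 - (s + 1)) ≤
      (1 - D' / n) ^ 2 * chooseSqProd n m (m / 2 - s) := fun D' s hs hD' => by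
    obtain ⟨a, ha⟩ : ∃ a, m / 2 - s = a + 1 := ⟨m / 2 - s - 1, by omega⟩
    rw [chooseSqProd, chooseSqProd, show m / 2 - (s + 1) = a by omega, ha,
      show m - a = m - m / 2 + s + 1 by omega, show m - (a + 1) = m - m / 2 + s by omega]
    exact choose_mul_choose_succ_sq_le (by omega)
  -- the antidiagonal `i + j = m` seen from its centre: `s ↦ chooseSqProd n m (m / 2 - s)`
  have hprofile := le_mul_pow_sub_of_succ_le (g := fun s => chooseSqProd n m (m / 2 - s))
    (sq_nonneg _) (fun s hs => by simpa using hstep 0 s hs (Nat.zero_le s)) (hstep D)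
    (m / 2 - min i (m - i)) (Nat.sub_le _ _)
  simp only [Nat.sub_zero, Nat.sub_sub_self (show min i (m - i) ≤ m / 2 by omega)] at hprofile
  rcases le_total i (m - i) with h | h
  · rwa [min_eq_left h] at hprofile ⊢
  · rw [min_eq_right h] at hprofile ⊢
    rwa [chooseSqProd_sub n m hi] at hprofile

theorem sub_sq_mul_chooseSqProd_le (D : ℕ) {i : ℕ} (hi : i ≤ m) :
    ((i : ℝ) - (m - i : ℕ)) ^ 2 * chooseSqProd n m i ≤ chooseSqProd n m (m / 2) *
      ((2 * ((m / 2 - min i (m - i) : ℕ) : ℝ) + 1) ^ 2 *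
        ((1 - D / n) ^ 2) ^ (m / 2 - min i (m - i) - D)) := by
  have h1 : (i : ℝ) ≤ (m - i : ℕ) + (2 * ((m / 2 - min i (m - i) : ℕ) : ℝ) + 1) := by
    exact_mod_cast (by omega : i ≤ (m - i) + (2 * (m / 2 - min i (m - i)) + 1))
  have h2 : ((m - i : ℕ) : ℝ) ≤ i + (2 * ((m / 2 - min i (m - i) : ℕ) : ℝ) + 1) := by
    exact_mod_cast (by omega : m - i ≤ i + (2 * (m / 2 - min i (m - i)) + 1))
  have hw : ((i : ℝ) - (m - i : ℕ)) ^ 2 ≤ (2 * ((m / 2 - min i (m - i) : ℕ) : ℝ) + 1) ^ 2 :=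
    sq_le_sq' (by linarith) (by linarith)
  calc ((i : ℝ) - (m - i : ℕ)) ^ 2 * chooseSqProd n m i
      ≤ (2 * ((m / 2 - min i (m - i) : ℕ) : ℝ) + 1) ^ 2 *
          (chooseSqProd n m (m / 2) * ((1 - D / n) ^ 2) ^ (m / 2 - min i (m - i) - D)) :=
        mul_le_mul hw (chooseSqProd_le n m D hi) (sq_nonneg _) (by positivity)
    _ = _ := by ring

end ChooseSqProd

section Contraction

variable {n D : ℕ} (hD : 1 ≤ D) (hDn : 4 * D ^ 2 ≤ n)
include hD hDn

theorem div_pos_and_div_le_quarter : 0 < (D / n : ℝ) ∧ (D / n : ℝ) ≤ 1 / 4 := by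
  have hn : (0 : ℝ) < n := by exact_mod_cast (by nlinarith : 0 < n)
  refine ⟨div_pos (by exact_mod_cast hD) hn, ?_⟩
  rw [div_le_iff₀ hn]
  have : 4 * D ≤ n := by nlinarith
  have : (4 * D : ℝ) ≤ n := by exact_mod_cast this
  linarith

theorem one_sub_div_sq_lt_one : (1 - D / n : ℝ) ^ 2 < 1 := by
  obtain ⟨h0, h1⟩ := div_pos_and_div_le_quarter hD hDn
  nlinarith

theorem one_half_le_one_sub_div_sq_pow : 1 / 2 ≤ ((1 - D / n : ℝ) ^ 2) ^ D := by
  have hn : (0 : ℝ) < n := by exact_mod_cast (by nlinarith : 0 < n)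
  have h2D : 2 * D * (D / n : ℝ) ≤ 1 / 2 := by
    rw [← mul_div_assoc, div_le_iff₀ hn]
    have : 4 * D ^ 2 ≤ n := hDn
    have : (4 * D ^ 2 : ℝ) ≤ n := by exact_mod_cast this
    nlinarith
  calc (1 : ℝ) / 2 ≤ 1 + ((2 * D : ℕ) : ℝ) * -(D / n) := by push_cast; linarith
    _ ≤ (1 + -(D / n : ℝ)) ^ (2 * D) :=
        one_add_mul_le_pow (by linarith [(div_pos_and_div_le_quarter hD hDn).2]) _
    _ = ((1 - D / n : ℝ) ^ 2) ^ D := by rw [← sub_eq_add_neg, pow_mul]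

theorem one_div_one_sub_one_sub_div_sq_pow_le :
    1 / (1 - (1 - D / n : ℝ) ^ 2) ^ 3 ≤ (n / D) ^ 3 := by
  obtain ⟨h0, h1⟩ := div_pos_and_div_le_quarter hD hDn
  have hx : (D / n : ℝ) ≤ 1 - (1 - D / n) ^ 2 := by nlinarith
  rw [show ((n : ℝ) / D) ^ 3 = 1 / (D / n) ^ 3 by rw [one_div, ← inv_pow, inv_div]]
  exact one_div_le_one_div_of_le (by positivity) (pow_le_pow_left₀ h0.le hx 3)

theorem sum_sub_sq_mul_chooseSqProd_le (m : ℕ) :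
    ∑ i ∈ range (m + 1), ((i : ℝ) - (m - i : ℕ)) ^ 2 * chooseSqProd n m i ≤
      32 * (n / D) ^ 3 * chooseSqProd n m (m / 2) := by
  set ρ := (1 - D / n : ℝ) ^ 2
  set F : ℕ → ℝ := fun s => (2 * (s : ℝ) + 1) ^ 2 * ρ ^ (s - D)
  set dist : ℕ → ℕ := fun i => m / 2 - min i (m - i)
  have hc : 0 ≤ chooseSqProd n m (m / 2) := sq_nonneg _
  have hterm : ∀ i ∈ range (m + 1), ((i : ℝ) - (m - i : ℕ)) ^ 2 * chooseSqProd n m i ≤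
      chooseSqProd n m (m / 2) * F (dist i) := fun i hi =>
    sub_sq_mul_chooseSqProd_le n m D (Nat.lt_succ_iff.1 (Finset.mem_range.1 hi))
  have hfib : ∀ s ∈ range (m / 2 + 1), #{i ∈ range (m + 1) | dist i = s} ≤ 2 := fun s _ => by
    have : {i ∈ range (m + 1) | dist i = s} ⊆ {m / 2 - s, m - m / 2 + s} := fun i hi => by
      simp only [Finset.mem_filter, Finset.mem_range, dist] at hi
      simp only [Finset.mem_insert, Finset.mem_singleton]
      omega
    exact (Finset.card_le_card this).trans Finset.card_le_two
  calc ∑ i ∈ range (m + 1), ((i : ℝ) - (m - i : ℕ)) ^ 2 * chooseSqProd n m i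
      ≤ chooseSqProd n m (m / 2) * ∑ i ∈ range (m + 1), F (dist i) := by
        rw [Finset.mul_sum]; exact Finset.sum_le_sum hterm
    _ ≤ chooseSqProd n m (m / 2) * (2 * ∑ s ∈ range (m / 2 + 1), F s) := by
        gcongr
        exact Finset.sum_comp_le_two_mul (fun s _ => by positivity)
          (fun i _ => Finset.mem_range.2 (by simp only [dist]; omega)) hfib
    _ ≤ chooseSqProd n m (m / 2) * (2 * (16 / (1 - ρ) ^ 3)) := by
        gcongr
        exact sum_range_sq_mul_pow_sub_le (sq_nonneg _) (one_sub_div_sq_lt_one hD hDn)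
          (one_half_le_one_sub_div_sq_pow hD hDn) _
    _ = 32 * (1 / (1 - ρ) ^ 3) * chooseSqProd n m (m / 2) := by ring
    _ ≤ 32 * (n / D) ^ 3 * chooseSqProd n m (m / 2) := by
        gcongr
        exact one_div_one_sub_one_sub_div_sq_pow_le hD hDn

theorem chooseSqVar_le_mul_sq (t : ℝ) :
    chooseSqVar n t ≤ 16 * (n / D) ^ 3 * chooseSqMoment n 0 t ^ 2 := by
  have hgroup : ∀ c : ℕ → ℕ → ℝ, ∑ i ∈ range (n + 1), ∑ j ∈ range (n + 1),
      c i j * (chooseSqWeight n t i * chooseSqWeight n t j) = ∑ m ∈ range (2 * n + 1),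
        t ^ (2 * m) * ∑ i ∈ range (m + 1), c i (m - i) * chooseSqProd n m i := fun c => by
    rw [Finset.sum_range_sum_range_eq_sum_range_sum_range n fun i j h => by
      rcases h with h | h <;> simp [chooseSqWeight, Nat.choose_eq_zero_of_lt h]]
    refine Finset.sum_congr rfl fun m _ => ?_
    rw [Finset.mul_sum]
    refine Finset.sum_congr rfl fun i hi => ?_
    have hm : t ^ (2 * m) = t ^ (2 * i) * t ^ (2 * (m - i)) := by
      rw [← pow_add, ← mul_add, Nat.add_sub_cancel' (Nat.lt_succ_iff.1 (Finset.mem_range.1 hi))]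
    rw [chooseSqWeight, chooseSqWeight, chooseSqProd, hm]
    ring
  have h2var : 2 * chooseSqVar n t = ∑ m ∈ range (2 * n + 1),
      t ^ (2 * m) * ∑ i ∈ range (m + 1), ((i : ℝ) - (m - i : ℕ)) ^ 2 * chooseSqProd n m i := by
    rw [two_mul_chooseSqVar, hgroup]
  have hsq : chooseSqMoment n 0 t ^ 2 = ∑ m ∈ range (2 * n + 1),
      t ^ (2 * m) * ∑ i ∈ range (m + 1), 1 * chooseSqProd n m i := by
    rw [← hgroup fun _ _ => 1]
    simp [chooseSqMoment_zero, sq, Finset.sum_mul_sum]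
  have hfiber : ∀ m, ∑ i ∈ range (m + 1), ((i : ℝ) - (m - i : ℕ)) ^ 2 * chooseSqProd n m i ≤
      32 * (n / D) ^ 3 * ∑ i ∈ range (m + 1), 1 * chooseSqProd n m i := fun m => by
    refine (sum_sub_sq_mul_chooseSqProd_le hD hDn m).trans
      (mul_le_mul_of_nonneg_left ?_ (by positivity))
    simp only [one_mul]
    exact Finset.single_le_sum (f := chooseSqProd n m) (fun i _ => sq_nonneg _)
      (show m / 2 ∈ range (m + 1) from Finset.mem_range.2 (by omega))
  have : 2 * chooseSqVar n t ≤ 32 * (n / D) ^ 3 * chooseSqMoment n 0 t ^ 2 := by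
    rw [h2var, hsq, Finset.mul_sum]
    refine Finset.sum_le_sum fun m _ => ?_
    rw [mul_left_comm]
    exact mul_le_mul_of_nonneg_left (hfiber m) (by rw [pow_mul]; positivity)
  linarith

end Contraction

section LargeT

variable {n : ℕ} {t : ℝ}

theorem sq_mul_sum_le_of_one_le (c : ℕ → ℝ) (hc : ∀ k ∈ range (n + 1), 0 ≤ c k) (hcn : c n = 0)
    (ht : 1 ≤ t) :
    t ^ 2 * ∑ k ∈ range (n + 1), c k * chooseSqWeight n t k ≤
      (∑ k ∈ range (n + 1), c k * (n.choose k : ℝ) ^ 2) * chooseSqMoment n 0 t := by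
  have hterm : ∀ k ∈ range (n + 1), t ^ 2 * (c k * chooseSqWeight n t k) ≤
      c k * (n.choose k : ℝ) ^ 2 * t ^ (2 * n) := fun k hk => by
    rcases (Nat.lt_succ_iff.1 (Finset.mem_range.1 hk)).lt_or_eq with hk' | rfl
    · calc t ^ 2 * (c k * chooseSqWeight n t k) = c k * (n.choose k : ℝ) ^ 2 * t ^ (2 + 2 * k) := by
            rw [chooseSqWeight, pow_add]; ring
        _ ≤ c k * (n.choose k : ℝ) ^ 2 * t ^ (2 * n) :=
            mul_le_mul_of_nonneg_left (pow_le_pow_right₀ ht (by omega))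
              (mul_nonneg (hc k hk) (sq_nonneg _))
    · simp [hcn]
  calc t ^ 2 * ∑ k ∈ range (n + 1), c k * chooseSqWeight n t k
      ≤ (∑ k ∈ range (n + 1), c k * (n.choose k : ℝ) ^ 2) * t ^ (2 * n) := by
        rw [Finset.mul_sum, Finset.sum_mul]; exact Finset.sum_le_sum hterm
    _ ≤ (∑ k ∈ range (n + 1), c k * (n.choose k : ℝ) ^ 2) * chooseSqMoment n 0 t :=
        mul_le_mul_of_nonneg_left (pow_le_chooseSqMoment_zero n t)
          (Finset.sum_nonneg fun k hk => mul_nonneg (hc k hk) (sq_nonneg _))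

theorem f_succ_le (ht : 1 ≤ t) :
    f (n + 1) t ≤ √(∑ k ∈ range (n + 1), ((k : ℝ) - n) ^ 2 * (n.choose k : ℝ) ^ 2) / π / t ^ 2 := by
  set K := ∑ k ∈ range (n + 1), ((k : ℝ) - n) ^ 2 * (n.choose k : ℝ) ^ 2
  have ht0 : 0 < t := one_pos.trans_le ht
  have hm := chooseSqMoment_zero_pos n t
  have hK := sq_mul_sum_le_of_one_le (n := n) (fun k => ((k : ℝ) - n) ^ 2) (fun k _ => sq_nonneg _)
    (by simp) ht
  -- for large `t` the weights concentrate at `k = n`, so the second moment about `n` is small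
  have hvar : t ^ 2 * chooseSqVar n t ≤ K * chooseSqMoment n 0 t ^ 2 := by
    have hv := mul_le_mul_of_nonneg_left (chooseSqVar_le n t n) (sq_nonneg t)
    have hK' := mul_le_mul_of_nonneg_left hK hm.le
    nlinarith
  have hsqrt : √(chooseSqVar n t) ≤ √K * chooseSqMoment n 0 t / t := by
    refine Real.sqrt_le_iff.2 ⟨by positivity, ?_⟩
    rw [div_pow, mul_pow, Real.sq_sqrt (by positivity), le_div_iff₀ (by positivity)]
    linarith
  rw [f_succ_eq n ht0, div_div, div_le_div_iff₀ (by positivity) (by positivity)]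
  calc √(chooseSqVar n t) * (π * t ^ 2) ≤ √K * chooseSqMoment n 0 t / t * (π * t ^ 2) :=
        mul_le_mul_of_nonneg_right hsqrt (by positivity)
    _ = √K * (π * t * chooseSqMoment n 0 t) := by field_simp

theorem sq_mul_sub_chooseSqMean_le (ht : 1 ≤ t) :
    t ^ 2 * (n - chooseSqMean n t) ≤ ∑ k ∈ range (n + 1), ((n : ℝ) - k) * (n.choose k : ℝ) ^ 2 := by
  have h := sq_mul_sum_le_of_one_le (n := n) (fun k => (n : ℝ) - k)
    (fun k hk => by simpa using (Nat.lt_succ_iff.1 (Finset.mem_range.1 hk))) (by simp) ht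
  have hm := chooseSqMoment_zero_pos n t
  have hsub : (n : ℝ) - chooseSqMean n t =
      (∑ k ∈ range (n + 1), ((n : ℝ) - k) * chooseSqWeight n t k) / chooseSqMoment n 0 t := by
    rw [chooseSqMean, eq_div_iff hm.ne', sub_mul, div_mul_cancel₀ _ hm.ne', chooseSqMoment_zero,
      chooseSqMoment_one, Finset.mul_sum, ← Finset.sum_sub_distrib]
    exact Finset.sum_congr rfl fun k _ => by ring
  rw [hsub, mul_div_assoc', div_le_iff₀ hm]
  exact h

end LargeT

theorem integrableOn_f_succ (n : ℕ) : IntegrableOn (f (n + 1)) (Set.Ioi 0) := by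
  set C := √(∑ k ∈ range (n + 1), ((k : ℝ) - n) ^ 2 * (n.choose k : ℝ) ^ 2) / π
  rw [← Set.Ioc_union_Ioi_eq_Ioi zero_le_one]
  refine IntegrableOn.union
    ((continuous_f_succ n).integrableOn_Icc.mono_set Set.Ioc_subset_Icc_self) ?_
  refine Integrable.mono'
    ((integrableOn_Ioi_rpow_of_lt (by norm_num : (-2 : ℝ) < -1) one_pos).const_mul C)
    (continuous_f_succ n).aestronglyMeasurable ((ae_restrict_iff' measurableSet_Ioi).2 ?_)
  refine Filter.Eventually.of_forall fun t (ht : 1 < t) => ?_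
  rw [Real.norm_of_nonneg (f_succ_nonneg n t), Real.rpow_neg (by linarith), Real.rpow_two,
    ← div_eq_mul_inv]
  exact f_succ_le ht.le

theorem chooseSqMean_sub_le_integral_f {n : ℕ} {V : ℝ}
    (hV : ∀ t, chooseSqVar n t ≤ V * chooseSqMoment n 0 t ^ 2) {a b : ℝ} (ha : 0 < a)
    (hab : a ≤ b) :
    chooseSqMean n b - chooseSqMean n a ≤ 2 * π * √V * ∫ t in Set.Ioi 0, f (n + 1) t := by
  have hderiv : ∀ t ∈ Set.Ioo a b, 2 * chooseSqVar n t / (t * chooseSqMoment n 0 t ^ 2) ≤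
      2 * π * √V * f (n + 1) t := fun t ht => by
    have ht0 : 0 < t := ha.trans ht.1
    have hm := chooseSqMoment_zero_pos n t
    have hvar := chooseSqVar_nonneg n t
    have hsqrt : √(chooseSqVar n t) ≤ √V * chooseSqMoment n 0 t := by
      simpa [Real.sqrt_mul' V (sq_nonneg _), Real.sqrt_sq hm.le] using Real.sqrt_le_sqrt (hV t)
    have : chooseSqVar n t ≤ √(chooseSqVar n t) * (√V * chooseSqMoment n 0 t) := by
      calc chooseSqVar n t = √(chooseSqVar n t) * √(chooseSqVar n t) :=
            (Real.mul_self_sqrt hvar).symm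
        _ ≤ _ := mul_le_mul_of_nonneg_left hsqrt (Real.sqrt_nonneg _)
    rw [f_succ_eq n ht0, div_le_iff₀ (by positivity)]
    field_simp
    nlinarith [Real.pi_pos]
  calc chooseSqMean n b - chooseSqMean n a ≤ ∫ t in a..b, 2 * π * √V * f (n + 1) t :=
        intervalIntegral.sub_le_integral_of_hasDeriv_right_of_le hab
          (chooseSqMean_continuous n).continuousOn
          (fun t ht => (hasDerivAt_chooseSqMean n (ha.trans ht.1).ne').hasDerivWithinAt)
          ((continuous_f_succ n).continuousOn.integrableOn_Icc.const_mul _) hderiv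
    _ ≤ 2 * π * √V * ∫ t in Set.Ioi 0, f (n + 1) t := by
        rw [intervalIntegral.integral_const_mul]
        refine mul_le_mul_of_nonneg_left ?_ (by positivity)
        rw [intervalIntegral.integral_of_le hab]
        exact setIntegral_mono_set (integrableOn_f_succ n)
          (Filter.Eventually.of_forall fun t => f_succ_nonneg n t)
          (Filter.Eventually.of_forall fun t ht => ha.trans ht.1)

theorem exists_chooseSqMean_le_one_and_sub_one_le (n : ℕ) :
    ∃ a b : ℝ, 0 < a ∧ a ≤ b ∧ chooseSqMean n a ≤ 1 ∧ (n : ℝ) - 1 ≤ chooseSqMean n b := by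
  have hzero : chooseSqMean n 0 = 0 := by
    rw [chooseSqMean, chooseSqMoment, Finset.sum_eq_zero fun k _ => ?_, zero_div]
    rcases Nat.eq_zero_or_pos k with rfl | hk
    · simp
    · simp [chooseSqWeight, zero_pow (by omega : 2 * k ≠ 0)]
  have hsmall : ∀ᶠ a in nhdsWithin (0 : ℝ) (Set.Ioi 0), chooseSqMean n a < 1 ∧ a ∈ Set.Ioo 0 1 :=
    ((((chooseSqMean_continuous n).tendsto 0).eventually
      (gt_mem_nhds (by rw [hzero]; exact one_pos))).filter_mono nhdsWithin_le_nhds).and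
      (Ioo_mem_nhdsGT one_pos)
  obtain ⟨a, hma, ha0, ha1⟩ := hsmall.exists
  set K := ∑ k ∈ range (n + 1), ((n : ℝ) - k) * (n.choose k : ℝ) ^ 2
  set b := max 1 K
  have hb : 1 ≤ b := le_max_left _ _
  have hbK : K ≤ b ^ 2 := (le_max_right _ _).trans (by nlinarith)
  have := sq_mul_sub_chooseSqMean_le (n := n) hb
  have : b ^ 2 * (n - chooseSqMean n b) ≤ b ^ 2 * 1 := by linarith
  refine ⟨a, b, ha0, ha1.le.trans hb, hma.le, ?_⟩
  linarith [le_of_mul_le_mul_left this (by positivity)]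

theorem sub_two_le_integral_f {n D : ℕ} (hD : 1 ≤ D) (hDn : 4 * D ^ 2 ≤ n) :
    (n : ℝ) - 2 ≤ 2 * π * √(16 * (n / D) ^ 3) * ∫ t in Set.Ioi 0, f (n + 1) t := by
  obtain ⟨a, b, ha, hab, hma, hmb⟩ := exists_chooseSqMean_le_one_and_sub_one_le n
  have := chooseSqMean_sub_le_integral_f (chooseSqVar_le_mul_sq hD hDn) ha hab
  linarith

theorem sqrt_div_le_integral_f {n D : ℕ} (hD : 1 ≤ D) (hDn : 4 * D ^ 2 ≤ n)
    (hnD : n ≤ 16 * D ^ 2) : √D / (256 * π) ≤ ∫ t in Set.Ioi 0, f (n + 1) t := by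
  have h := sub_two_le_integral_f hD hDn
  set I := ∫ t in Set.Ioi 0, f (n + 1) t
  have hI : 0 ≤ I := setIntegral_nonneg measurableSet_Ioi fun t _ => f_succ_nonneg n t
  have hD0 : (0 : ℝ) < D := by exact_mod_cast hD
  have hsD : √(D : ℝ) * √D = D := Real.mul_self_sqrt hD0.le
  have hDn' : (4 * D ^ 2 : ℝ) ≤ n := by exact_mod_cast hDn
  have hnD' : (n / D : ℝ) ≤ 16 * D := by
    rw [div_le_iff₀ hD0]; exact_mod_cast (by nlinarith : n ≤ 16 * D * D)
  have hsqrt : √(16 * (n / D : ℝ) ^ 3) ≤ 256 * D * √D := by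
    refine Real.sqrt_le_iff.2 ⟨by positivity, ?_⟩
    have : (n / D : ℝ) ^ 3 ≤ (16 * D) ^ 3 := pow_le_pow_left₀ (by positivity) hnD' 3
    nlinarith
  have hmain : (2 * D * √D) * √D ≤ (2 * D * √D) * (I * (256 * π)) := by
    have := h.trans (mul_le_mul_of_nonneg_right
      (mul_le_mul_of_nonneg_left hsqrt (by positivity : (0 : ℝ) ≤ 2 * π)) hI)
    have hD2 : (1 : ℝ) ≤ D ^ 2 := one_le_pow₀ (by exact_mod_cast hD)
    rw [mul_assoc, hsD]
    linarith
  rw [div_le_iff₀ (by positivity)]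
  exact le_of_mul_le_mul_left hmain (by positivity)

theorem nat_sqrt_div_two_bounds {n : ℕ} (hn : 4 ≤ n) :
    1 ≤ n.sqrt / 2 ∧ 4 * (n.sqrt / 2) ^ 2 ≤ n ∧ n ≤ 16 * (n.sqrt / 2) ^ 2 := by
  have h1 := Nat.sqrt_le' n
  have h2 := Nat.lt_succ_sqrt' n
  have h4 : 2 ≤ n.sqrt := Nat.le_sqrt'.2 hn
  generalize hD : n.sqrt / 2 = D
  have hr : 2 * D ≤ n.sqrt ∧ n.sqrt ≤ 2 * D + 1 := by omega
  have h3 : n.sqrt.succ ^ 2 ≤ (2 * D + 2) ^ 2 := Nat.pow_le_pow_left (by omega) 2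
  have hD1 : 1 ≤ D := by omega
  have h5 : (2 * D + 2) ^ 2 ≤ 16 * D ^ 2 := by nlinarith
  exact ⟨hD1, by nlinarith, by omega⟩

theorem tendsto_nat_sqrt_sub_one_div_two :
    Filter.Tendsto (fun d : ℕ => (d - 1).sqrt / 2) Filter.atTop Filter.atTop :=
  Filter.tendsto_atTop_atTop.2 fun b => ⟨(2 * b) ^ 2 + 1, fun d hd =>
    (Nat.le_div_iff_mul_le two_pos).2 (by rw [mul_comm]; exact Nat.le_sqrt'.2 (by omega))⟩

theorem stmt_10 :
    Filter.Tendsto (fun d : ℕ => ∫ t in Set.Ioi (0 : ℝ), f d t) Filter.atTop Filter.atTop := by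
  refine Filter.tendsto_atTop_mono' _ ?_ ((tendsto_sqrt_atTop.comp
    (tendsto_natCast_atTop_atTop.comp tendsto_nat_sqrt_sub_one_div_two)).atTop_div_const
      (by positivity : (0 : ℝ) < 256 * π))
  filter_upwards [Filter.eventually_ge_atTop 5] with d hd
  obtain ⟨n, rfl⟩ : ∃ n, d = n + 1 := ⟨d - 1, by omega⟩
  obtain ⟨hD, hDn, hnD⟩ := nat_sqrt_div_two_bounds (by omega : 4 ≤ n)
  exact sqrt_div_le_integral_f hD hDn hnD
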